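/- Let s ≥ 1 be an integer, (α_1,…,α_s) ∈ (0,1)^s, and let ε : ℕ → ℝ_{≥0} be a function tending to 0. Then there exists a function ε' : ℕ → ℝ_{≥0} tending to 0 (depending only on ε, s and the α_i) such that for all integers n ≥ 1, ∑ ε(u_1)·∏_{i=1}^s u_i^{−α_i} ≤ ε'(n)·n^{s−1−∑_i α_i}, where the sum runs over all s-tuples of integers (u_1,…,u_s) with 1 ≤ u_i ≤ n for all i and u_1 + ⋯ + u_s = n. -/

import Mathlib

/-!
Splitting off the first part writes the sum as `∑ₖ ε(k) k^{-α₁} U'(n - k)`, where `U'` is the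
same sum without `ε` for `(α₂, …, α_s)`. By induction on `s` these unweighted sums satisfy
`U(n) = O(n^{s-1-∑ α})`: each inductive step is a convolution `∑ₖ k^a (n-k)^b = O(n^{1+a+b})`
(`a, b > -1`), bounded by splitting at `n / 2` and comparing `∑ k^γ` with `∫ x^γ`. Hence the
weights `k^{-α₁} U'(n - k) / n^{s-1-∑ α}` have bounded total mass, and for fixed `k` they are
`O(n^{α₁-1}) → 0`; so `ε' n`, the average of `ε` against these weights, tends to `0`.
-/

open Filter Topology Finset

lemma rpow_le_two_rpow_abs_mul_rpow {x y : ℝ} (e : ℝ) (hx : 0 < x) (hxy : x / 2 ≤ y)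
    (hyx : y ≤ x) : y ^ e ≤ 2 ^ |e| * x ^ e := by
  have hy : 0 < y := by linarith
  rcases le_or_gt 0 e with he | he
  · calc y ^ e ≤ x ^ e := Real.rpow_le_rpow hy.le hyx he
      _ ≤ 2 ^ |e| * x ^ e :=
        le_mul_of_one_le_left (by positivity) (Real.one_le_rpow (by norm_num) (abs_nonneg e))
  · calc y ^ e ≤ (x / 2) ^ e := Real.rpow_le_rpow_of_nonpos (by positivity) hxy he.le
      _ = 2 ^ |e| * x ^ e := by
        rw [abs_of_neg he, Real.div_rpow hx.le zero_le_two, Real.rpow_neg zero_le_two]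
        ring

-- the larger of `x` and `y` is at least `(x + y) / 2`
lemma rpow_mul_rpow_le {x y : ℝ} (a b : ℝ) (hx : 0 < x) (hy : 0 < y) :
    x ^ a * y ^ b ≤ 2 ^ |b| * (x + y) ^ b * x ^ a + 2 ^ |a| * (x + y) ^ a * y ^ b := by
  have hxa : 0 ≤ x ^ a := by positivity
  have hyb : 0 ≤ y ^ b := by positivity
  rcases le_total x y with h | h
  · have := rpow_le_two_rpow_abs_mul_rpow (x := x + y) (y := y) b (by positivity) (by linarith)
      (by linarith)
    refine le_add_of_le_of_nonneg ?_ (by positivity)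
    nlinarith [mul_le_mul_of_nonneg_left this hxa]
  · have := rpow_le_two_rpow_abs_mul_rpow (x := x + y) (y := x) a (by positivity) (by linarith)
      (by linarith)
    refine le_add_of_nonneg_of_le (by positivity) ?_
    nlinarith [mul_le_mul_of_nonneg_right this hyb]

lemma exists_sum_Icc_rpow_le {γ : ℝ} (hγ : -1 < γ) :
    ∃ C, ∀ n : ℕ, ∑ k ∈ Icc 1 n, (k : ℝ) ^ γ ≤ C * (n : ℝ) ^ (γ + 1) := by
  rcases le_or_gt 0 γ with h0 | h0
  · refine ⟨1, fun n => ?_⟩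
    calc ∑ k ∈ Icc 1 n, (k : ℝ) ^ γ ≤ ∑ _k ∈ Icc 1 n, (n : ℝ) ^ γ :=
          sum_le_sum fun k hk => Real.rpow_le_rpow (by positivity)
            (by exact_mod_cast (mem_Icc.mp hk).2) h0
      _ = 1 * (n : ℝ) ^ (γ + 1) := by
          rcases n.eq_zero_or_pos with rfl | hn
          · simp [Real.zero_rpow (by linarith : γ + 1 ≠ 0)]
          · rw [sum_const, Nat.card_Icc, Real.rpow_add_one (by positivity)]
            simp [mul_comm]
  · have hγ1 : 0 < γ + 1 := by linarith
    refine ⟨1 / (γ + 1), fun n => ?_⟩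
    rcases n.eq_zero_or_pos with rfl | hn
    · simp [Real.zero_rpow hγ1.ne']
    obtain ⟨m, rfl⟩ : ∃ m, n = m + 1 := ⟨n - 1, by omega⟩
    have hreindex : ∑ k ∈ Icc 1 (m + 1), (k : ℝ) ^ γ
        = ∑ k ∈ range m, ((1 : ℝ) + ↑(k + 1)) ^ γ + 1 := by
      rw [← Ico_add_one_right_eq_Icc, sum_Ico_eq_sum_range, Nat.add_sub_cancel, sum_range_succ']
      push_cast
      simp [add_comm]
    -- `∑ k ∈ Icc 2 n, k ^ γ ≤ ∫ x in 1..n, x ^ γ`, the integrand being antitone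
    have hint : ∑ k ∈ range m, ((1 : ℝ) + ↑(k + 1)) ^ γ ≤ ∫ x in (1 : ℝ)..1 + m, x ^ γ :=
      AntitoneOn.sum_le_integral fun x hx y _ hxy =>
        Real.rpow_le_rpow_of_nonpos (by linarith [hx.1]) hxy h0.le
    rw [integral_rpow (Or.inl hγ), Real.one_rpow, le_div_iff₀ hγ1] at hint
    rw [hreindex, div_mul_eq_mul_div, one_mul, le_div_iff₀ hγ1]
    push_cast at hint ⊢
    rw [add_comm (m : ℝ) 1]
    linarith

lemma exists_sum_Ico_rpow_mul_rpow_le {a b : ℝ} (ha : -1 < a) (hb : -1 < b) :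
    ∃ C, ∀ n : ℕ, 0 < n →
      ∑ k ∈ Ico 1 n, (k : ℝ) ^ a * ((n - k : ℕ) : ℝ) ^ b ≤ C * (n : ℝ) ^ (1 + a + b) := by
  obtain ⟨A, hA⟩ := exists_sum_Icc_rpow_le ha
  obtain ⟨B, hB⟩ := exists_sum_Icc_rpow_le hb
  refine ⟨2 ^ |b| * A + 2 ^ |a| * B, fun n hn => ?_⟩
  have hsub : ∀ f : ℕ → ℝ, (∀ k, 0 ≤ f k) → ∑ k ∈ Ico 1 n, f k ≤ ∑ k ∈ Icc 1 n, f k :=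
    fun f hf => sum_le_sum_of_subset_of_nonneg Ico_subset_Icc_self fun k _ _ => hf k
  have hreflect : ∑ k ∈ Ico 1 n, ((n - k : ℕ) : ℝ) ^ b = ∑ k ∈ Ico 1 n, (k : ℝ) ^ b := by
    simpa using sum_Ico_reflect (fun k => (k : ℝ) ^ b) 1 (Nat.le_succ n)
  calc ∑ k ∈ Ico 1 n, (k : ℝ) ^ a * ((n - k : ℕ) : ℝ) ^ b
      ≤ ∑ k ∈ Ico 1 n, (2 ^ |b| * (n : ℝ) ^ b * (k : ℝ) ^ a
          + 2 ^ |a| * (n : ℝ) ^ a * ((n - k : ℕ) : ℝ) ^ b) := by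
        refine sum_le_sum fun k hk => ?_
        obtain ⟨hk1, hkn⟩ := mem_Ico.mp hk
        have hsum : (k : ℝ) + ((n - k : ℕ) : ℝ) = n := by
          rw [← Nat.cast_add, Nat.add_sub_cancel' hkn.le]
        simpa only [hsum] using rpow_mul_rpow_le a b (x := k) (y := ((n - k : ℕ) : ℝ))
          (by exact_mod_cast hk1) (by simp only [Nat.cast_pos]; omega)
    _ = 2 ^ |b| * (n : ℝ) ^ b * ∑ k ∈ Ico 1 n, (k : ℝ) ^ a
          + 2 ^ |a| * (n : ℝ) ^ a * ∑ k ∈ Ico 1 n, (k : ℝ) ^ b := by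
        rw [sum_add_distrib, ← mul_sum, ← mul_sum, hreflect]
    _ ≤ 2 ^ |b| * (n : ℝ) ^ b * (A * (n : ℝ) ^ (a + 1))
          + 2 ^ |a| * (n : ℝ) ^ a * (B * (n : ℝ) ^ (b + 1)) := by
        gcongr
        · exact (hsub _ fun k => by positivity).trans (hA n)
        · exact (hsub _ fun k => by positivity).trans (hB n)
    _ = (2 ^ |b| * A + 2 ^ |a| * B) * (n : ℝ) ^ (1 + a + b) := by
        have hn' : (0 : ℝ) < n := by exact_mod_cast hn
        rw [Real.rpow_add hn', Real.rpow_add hn', Real.rpow_add hn', Real.rpow_add hn',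
          Real.rpow_one]
        ring

/-- A case of the Silverman–Toeplitz theorem. -/
lemma tendsto_sum_mul_of_tendsto_zero {S : ℕ → Finset ℕ} {a : ℕ → ℕ → ℝ} {ε : ℕ → ℝ} {C : ℝ}
    (ha_nonneg : ∀ n k, 0 ≤ a n k) (ha_sum : ∀ᶠ n in atTop, ∑ k ∈ S n, a n k ≤ C)
    (ha : ∀ k, Tendsto (fun n => a n k) atTop (𝓝 0)) (hε : Tendsto ε atTop (𝓝 0)) :
    Tendsto (fun n => ∑ k ∈ S n, ε k * a n k) atTop (𝓝 0) := by
  have hεabs : Tendsto (fun k => |ε k|) atTop (𝓝 0) := by simpa using hε.abs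
  obtain ⟨M, hM⟩ := hεabs.bddAbove_range
  rw [Metric.tendsto_nhds]
  intro η hη
  set δ := η / (2 * (|C| + 1))
  have hδ : 0 < δ := by positivity
  obtain ⟨N, hN⟩ := eventually_atTop.mp ((tendsto_order.mp hεabs).2 δ hδ)
  have hhead : Tendsto (fun n => |M| * ∑ k ∈ range N, a n k) atTop (𝓝 0) := by
    simpa using (tendsto_finsetSum (range N) fun k _ => ha k).const_mul |M|
  filter_upwards [ha_sum, (tendsto_order.mp hhead).2 (η / 2) (by positivity)] with n hsum hhead
  have hsplit : ∀ k, |ε k| * a n k ≤ (if k < N then |M| * a n k else 0) + δ * a n k := by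
    intro k
    split_ifs with hk
    · nlinarith [ha_nonneg n k, hM ⟨k, rfl⟩, le_abs_self M, abs_nonneg (ε k), hδ]
    · nlinarith [ha_nonneg n k, hN k (not_lt.mp hk)]
  have hδC : δ * ∑ k ∈ S n, a n k ≤ η / 2 := by
    calc δ * ∑ k ∈ S n, a n k ≤ δ * (|C| + 1) :=
          mul_le_mul_of_nonneg_left (hsum.trans (by linarith [le_abs_self C])) hδ.le
      _ = η / 2 := by simp only [δ]; field_simp
  rw [Real.dist_eq, sub_zero]
  calc |∑ k ∈ S n, ε k * a n k| ≤ ∑ k ∈ S n, |ε k| * a n k := by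
        refine (abs_sum_le_sum_abs _ _).trans_eq (sum_congr rfl fun k _ => ?_)
        rw [abs_mul, abs_of_nonneg (ha_nonneg n k)]
    _ ≤ ∑ k ∈ S n, ((if k < N then |M| * a n k else 0) + δ * a n k) :=
        sum_le_sum fun k _ => hsplit k
    _ = ∑ k ∈ S n with k < N, |M| * a n k + δ * ∑ k ∈ S n, a n k := by
        rw [sum_add_distrib, sum_filter, mul_sum]
    _ ≤ |M| * ∑ k ∈ range N, a n k + η / 2 := by
        rw [← mul_sum]
        refine add_le_add (mul_le_mul_of_nonneg_left ?_ (abs_nonneg M)) hδC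
        refine sum_le_sum_of_subset_of_nonneg (fun k hk => ?_) fun k _ _ => ha_nonneg n k
        simpa using (mem_filter.mp hk).2
    _ < η := by linarith

def compositions (s n : ℕ) : Finset (Fin s → ℕ) :=
  (Fintype.piFinset fun _ : Fin s => Icc 1 n).filter fun u => ∑ i, u i = n

lemma mem_compositions {s n : ℕ} {u : Fin s → ℕ} :
    u ∈ compositions s n ↔ (∀ i, 1 ≤ u i) ∧ ∑ i, u i = n := by
  simp only [compositions, mem_filter, Fintype.mem_piFinset, mem_Icc, forall_and]
  constructor
  · exact fun ⟨⟨h1, _⟩, h2⟩ => ⟨h1, h2⟩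
  · rintro ⟨h1, rfl⟩
    exact ⟨⟨h1, fun i => single_le_sum (fun j _ => Nat.zero_le (u j)) (mem_univ i)⟩, rfl⟩

lemma compositions_zero_left {n : ℕ} (hn : n ≠ 0) : compositions 0 n = ∅ := by
  ext u
  simp [mem_compositions, hn.symm]

lemma compositions_zero_right {s : ℕ} (hs : s ≠ 0) : compositions s 0 = ∅ := by
  ext u
  simp only [mem_compositions, notMem_empty, iff_false, not_and, sum_eq_zero_iff, mem_univ,
    true_implies]
  intro h1 h0
  have := h1 ⟨0, Nat.pos_of_ne_zero hs⟩
  simp_all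

lemma compositions_one {n : ℕ} (hn : n ≠ 0) : compositions 1 n = {fun _ => n} := by
  ext u
  simp only [mem_compositions, Fin.forall_fin_one, Fin.sum_univ_one, mem_singleton, funext_iff]
  omega

lemma sum_compositions_succ {M : Type*} [AddCommMonoid M] (s n : ℕ)
    (F : (Fin (s + 1) → ℕ) → M) :
    ∑ u ∈ compositions (s + 1) n, F u
      = ∑ k ∈ Icc 1 n, ∑ v ∈ compositions s (n - k), F (Fin.cons k v) := by
  rw [sum_sigma']
  refine sum_bij' (fun u _ => ⟨u 0, Fin.tail u⟩) (fun x _ => Fin.cons x.1 x.2) ?_ ?_ ?_ ?_ ?_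
  · intro u hu
    rw [mem_compositions, Fin.sum_univ_succ] at hu
    simp only [mem_sigma, mem_Icc, mem_compositions, Fin.tail]
    exact ⟨⟨hu.1 0, by omega⟩, fun i => hu.1 i.succ, by omega⟩
  · rintro ⟨k, v⟩ hkv
    simp only [mem_sigma, mem_Icc, mem_compositions] at hkv
    simp only [mem_compositions, Fin.sum_cons, Fin.forall_fin_succ, Fin.cons_zero, Fin.cons_succ]
    exact ⟨⟨hkv.1.1, hkv.2.1⟩, by omega⟩
  · intro u _
    exact Fin.cons_self_tail u
  · rintro ⟨k, v⟩ _
    simp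
  · intro u _
    simp

noncomputable def compositionSum {s : ℕ} (α : Fin s → ℝ) (n : ℕ) : ℝ :=
  ∑ u ∈ compositions s n, ∏ i, (u i : ℝ) ^ (-α i)

lemma compositionSum_nonneg {s : ℕ} (α : Fin s → ℝ) (n : ℕ) : 0 ≤ compositionSum α n :=
  sum_nonneg fun _ _ => prod_nonneg fun _ _ => by positivity

lemma sum_compositions_succ_mul_prod_rpow {s : ℕ} (f : ℕ → ℝ) (α : Fin (s + 1) → ℝ) (n : ℕ) :
    ∑ u ∈ compositions (s + 1) n, f (u 0) * ∏ i, (u i : ℝ) ^ (-α i)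
      = ∑ k ∈ Icc 1 n, f k * ((k : ℝ) ^ (-α 0) * compositionSum (Fin.tail α) (n - k)) := by
  rw [sum_compositions_succ]
  refine sum_congr rfl fun k _ => ?_
  simp only [compositionSum, mul_sum, Fin.prod_univ_succ, Fin.cons_zero, Fin.cons_succ, Fin.tail]

lemma compositionSum_succ {s : ℕ} (α : Fin (s + 1) → ℝ) (n : ℕ) :
    compositionSum α n
      = ∑ k ∈ Icc 1 n, (k : ℝ) ^ (-α 0) * compositionSum (Fin.tail α) (n - k) := by
  rw [compositionSum]
  simpa using sum_compositions_succ_mul_prod_rpow 1 α n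

lemma exists_compositionSum_le : ∀ {s : ℕ} (α : Fin s → ℝ), (∀ i, α i < 1) →
    ∃ C, 0 ≤ C ∧ ∀ n, n ≠ 0 → compositionSum α n ≤ C * (n : ℝ) ^ ((s : ℝ) - 1 - ∑ i, α i)
  | 0, α, _ => ⟨0, le_rfl, fun n hn => by simp [compositionSum, compositions_zero_left hn]⟩
  | 1, α, _ => ⟨1, zero_le_one, fun n hn => by simp [compositionSum, compositions_one hn]⟩
  | s + 2, α, hα => by
    obtain ⟨C, hC0, hC⟩ := exists_compositionSum_le (Fin.tail α) fun i => hα i.succ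
    set b : ℝ := ((s + 1 : ℕ) : ℝ) - 1 - ∑ i, Fin.tail α i
    have hb : -1 < b := by
      have : ∑ i, Fin.tail α i < ∑ _i : Fin (s + 1), (1 : ℝ) :=
        sum_lt_sum_of_nonempty univ_nonempty fun i _ => hα i.succ
      simp only [sum_const, card_univ, Fintype.card_fin, nsmul_eq_mul, mul_one] at this
      linarith
    obtain ⟨D, hD⟩ := exists_sum_Ico_rpow_mul_rpow_le (neg_lt_neg (hα 0)) hb
    refine ⟨C * max D 0, by positivity, fun n hn => ?_⟩
    rw [compositionSum_succ, ← Ico_insert_right (Nat.one_le_iff_ne_zero.mpr hn),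
      sum_insert right_notMem_Ico, Nat.sub_self, compositionSum, compositions_zero_right (by omega),
      sum_empty, mul_zero, zero_add]
    calc ∑ k ∈ Ico 1 n, (k : ℝ) ^ (-α 0) * compositionSum (Fin.tail α) (n - k)
        ≤ ∑ k ∈ Ico 1 n, (k : ℝ) ^ (-α 0) * (C * ((n - k : ℕ) : ℝ) ^ b) := by
          refine sum_le_sum fun k hk => mul_le_mul_of_nonneg_left (hC _ ?_) (by positivity)
          have := (mem_Ico.mp hk).2
          omega
      _ = C * ∑ k ∈ Ico 1 n, (k : ℝ) ^ (-α 0) * ((n - k : ℕ) : ℝ) ^ b := by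
          rw [mul_sum]; exact sum_congr rfl fun k _ => by ring
      _ ≤ C * (max D 0 * (n : ℝ) ^ (1 + -α 0 + b)) := by
          gcongr
          exact (hD n (Nat.pos_of_ne_zero hn)).trans (by gcongr; exact le_max_left D 0)
      _ = C * max D 0 * (n : ℝ) ^ (((s + 2 : ℕ) : ℝ) - 1 - ∑ i, α i) := by
          rw [Fin.sum_univ_succ (f := α)]
          simp only [b, Fin.tail]
          push_cast
          ring_nf

lemma tendsto_sum_compositions_div_rpow {s : ℕ} (α : Fin (s + 1) → ℝ) (hα : ∀ i, α i < 1)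
    {ε : ℕ → ℝ} (hε : Tendsto ε atTop (𝓝 0)) :
    Tendsto (fun n : ℕ => (∑ u ∈ compositions (s + 1) n, ε (u 0) * ∏ i, (u i : ℝ) ^ (-α i))
      / (n : ℝ) ^ (((s + 1 : ℕ) : ℝ) - 1 - ∑ i, α i)) atTop (𝓝 0) := by
  set E : ℝ := ((s + 1 : ℕ) : ℝ) - 1 - ∑ i, α i
  set e : ℝ := (s : ℝ) - 1 - ∑ i, Fin.tail α i
  have hexp : e - E = -(1 - α 0) := by
    simp only [e, E, Fin.sum_univ_succ (f := α), Fin.tail]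
    push_cast
    ring
  obtain ⟨C, -, hC⟩ := exists_compositionSum_le α hα
  obtain ⟨C', hC'0, hC'⟩ := exists_compositionSum_le (Fin.tail α) fun i => hα i.succ
  have ha_nonneg (n k : ℕ) :
      0 ≤ (k : ℝ) ^ (-α 0) * compositionSum (Fin.tail α) (n - k) / (n : ℝ) ^ E := by
    have := compositionSum_nonneg (Fin.tail α) (n - k)
    positivity
  have hsplit (n : ℕ) :
      (∑ u ∈ compositions (s + 1) n, ε (u 0) * ∏ i, (u i : ℝ) ^ (-α i)) / (n : ℝ) ^ E
        = ∑ k ∈ Icc 1 n,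
            ε k * ((k : ℝ) ^ (-α 0) * compositionSum (Fin.tail α) (n - k) / (n : ℝ) ^ E) := by
    rw [sum_compositions_succ_mul_prod_rpow, sum_div]
    exact sum_congr rfl fun k _ => mul_div_assoc _ _ _
  refine (tendsto_congr hsplit).mpr (tendsto_sum_mul_of_tendsto_zero (C := C) ha_nonneg ?_ ?_ hε)
  · filter_upwards [eventually_ne_atTop 0] with n hn
    rw [← sum_div, ← compositionSum_succ, div_le_iff₀ (by positivity)]
    exact hC n hn
  · intro k
    have hlim : Tendsto (fun n : ℕ => (k : ℝ) ^ (-α 0) * (C' * 2 ^ |e|) * (n : ℝ) ^ (e - E))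
        atTop (𝓝 0) := by
      have := ((tendsto_rpow_neg_atTop (by linarith [hα 0] : 0 < 1 - α 0)).comp
        (tendsto_natCast_atTop_atTop (R := ℝ))).const_mul ((k : ℝ) ^ (-α 0) * (C' * 2 ^ |e|))
      rw [mul_zero] at this
      rw [hexp]
      exact this
    refine squeeze_zero' (Eventually.of_forall fun n => ha_nonneg n k) ?_ hlim
    filter_upwards [eventually_gt_atTop (2 * k)] with n hn
    have hn0 : (0 : ℝ) < n := by exact_mod_cast (Nat.zero_lt_of_lt hn)
    have hnk : ((n - k : ℕ) : ℝ) ^ e ≤ 2 ^ |e| * (n : ℝ) ^ e := by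
      refine rpow_le_two_rpow_abs_mul_rpow e hn0 ?_ (by exact_mod_cast Nat.sub_le n k)
      rw [Nat.cast_sub (by omega)]
      have : 2 * (k : ℝ) ≤ n := by exact_mod_cast hn.le
      linarith
    calc (k : ℝ) ^ (-α 0) * compositionSum (Fin.tail α) (n - k) / (n : ℝ) ^ E
        ≤ (k : ℝ) ^ (-α 0) * (C' * (2 ^ |e| * (n : ℝ) ^ e)) / (n : ℝ) ^ E := by
          gcongr
          exact (hC' (n - k) (by omega)).trans
            (by simpa [e] using mul_le_mul_of_nonneg_left hnk hC'0)
      _ = (k : ℝ) ^ (-α 0) * (C' * 2 ^ |e|) * (n : ℝ) ^ (e - E) := by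
          rw [Real.rpow_sub hn0 e E]
          ring

/-- For `s ≥ 1`, `(α₁,…,α_s) ∈ (0,1)^s` and `ε : ℕ → ℝ₊` tending to `0`, there is
`ε' : ℕ → ℝ₊` tending to `0` such that for all `n ≥ 1`, the sum of `ε(u₁)·∏ u_i^{−α_i}`
over all `s`-tuples `(u₁,…,u_s)` of positive integers with `u₁ + ⋯ + u_s = n` is at most
`ε'(n)·n^{s−1−∑ α_i}`. -/
theorem stmt_17 (s : ℕ) (hs : 1 ≤ s) (α : Fin s → ℝ) (hα : ∀ i, α i ∈ Set.Ioo (0:ℝ) 1)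
    (ε : ℕ → ℝ) (hε0 : ∀ n, 0 ≤ ε n) (hε : Tendsto ε atTop (𝓝 0)) :
    ∃ ε' : ℕ → ℝ, (∀ n, 0 ≤ ε' n) ∧ Tendsto ε' atTop (𝓝 0) ∧
      ∀ n : ℕ, 1 ≤ n →
        ∑ u ∈ (Fintype.piFinset fun _ : Fin s => Finset.Icc 1 n).filter
            (fun u => ∑ i, u i = n),
          ε (u ⟨0, hs⟩) * ∏ i, (u i : ℝ) ^ (-(α i)) ≤
          ε' n * (n : ℝ) ^ ((s : ℝ) - 1 - ∑ i, α i) := by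
  obtain ⟨m, rfl⟩ : ∃ m, s = m + 1 := ⟨s - 1, by omega⟩
  refine ⟨fun n => (∑ u ∈ compositions (m + 1) n, ε (u 0) * ∏ i, (u i : ℝ) ^ (-α i))
      / (n : ℝ) ^ (((m + 1 : ℕ) : ℝ) - 1 - ∑ i, α i), fun n => ?_,
    tendsto_sum_compositions_div_rpow α (fun i => (hα i).2) hε, fun n hn => ?_⟩
  · exact div_nonneg
      (sum_nonneg fun u _ => mul_nonneg (hε0 _) (prod_nonneg fun i _ => by positivity))
      (by positivity)
  · rw [div_mul_cancel₀ _ (by positivity)]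
    -- `compositions` unfolds to the finset above, and `⟨0, hs⟩ = 0` definitionally
    rfl
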